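/- arXiv:1209.3927 — 2 statements merged into one kernel-verified Lean document; each statement's English description precedes it below -/
import Mathlib

section
/- For any word v ∈ {a,b}* and letters x ≠ y with {x,y} = {a,b}: μ_v(xy) = ψ(v) x y. -/
def palClosure (w : List Bool) : List Bool :=
  let k := Nat.find (p := fun k => (w.drop k).reverse = w.drop k)
    ⟨w.length, by simp⟩
  w.take k ++ w.drop k ++ (w.take k).reverse

def psi (v : List Bool) : List Bool := v.foldl (fun w x => palClosure (w ++ [x])) []

def E (v : List Bool) : List Bool := v.map (!·)

def mu (x : Bool) (w : List Bool) : List Bool := w.flatMap (fun y => if y = x then [x] else [x, y])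

def muW : List Bool → List Bool → List Bool
  | [], w => w
  | x :: v, w => mu x (muW v w)

def vN (n : ℕ) : List Bool := (List.range n).map (fun i => decide (i % 2 = 1))

def fibF : ℕ → ℕ
  | 0 => 1
  | 1 => 1
  | n + 2 => fibF (n + 1) + fibF n

def HasPeriod (w : List Bool) (p : ℕ) : Prop :=
  0 < p ∧ ∀ i j (hi : i < w.length) (hj : j < w.length),
    i % p = j % p → w.get ⟨i, hi⟩ = w.get ⟨j, hj⟩

noncomputable def minPeriod (w : List Bool) : ℕ := sInf {p | HasPeriod w p}

def dOp : List Bool → List Bool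
  | x :: y :: u => y :: x :: u
  | w => w

def cOp (v : List Bool) : List Bool := (dOp v.reverse).reverse

def contAux : List ℕ → ℕ
  | [] => 1
  | [a] => a
  | a :: b :: t => a * contAux (b :: t) + contAux t


/-!
By Justin's formula `ψ(z v) = μ_z(ψ v) z`, the claim follows by induction on `v`, because
`μ_z(x y) = z x y` whenever `{x, y} = {a, b}`.

Justin's formula comes from comparing palindromic suffixes: `μ_z(p) z` is a palindrome iff `p` is,
and every palindromic suffix of `μ_z(u) z` (or of `μ_z(u)`, when `u` ends in the other letter) is
the image of a palindromic suffix of `u`. Hence `μ_z` carries the longest palindromic suffix of `u`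
to that of the image, and so commutes with palindromic closure.
-/

open List

section Palindrome

variable {α : Type*}

def IsLongestPalSuffix (s w : List α) : Prop :=
  s <:+ w ∧ s.reverse = s ∧ ∀ r, r <:+ w → r.reverse = r → r.length ≤ s.length

theorem exists_isLongestPalSuffix (w : List α) : ∃ s, IsLongestPalSuffix s w := by
  classical
  have hex : ∃ k, (w.drop k).reverse = w.drop k := ⟨w.length, by simp⟩
  refine ⟨w.drop (Nat.find hex), drop_suffix _ _, Nat.find_spec hex, fun r hr hpal => ?_⟩
  have hK : Nat.find hex ≤ w.length - r.length :=
    Nat.find_min' hex (by rwa [← suffix_iff_eq_drop.mp hr])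
  have := hr.length_le
  rw [length_drop]
  omega

theorem IsLongestPalSuffix.ne_nil {s q : List α} {a : α} (h : IsLongestPalSuffix s (q ++ [a])) :
    s ≠ [] := by
  rintro rfl
  simpa using h.2.2 [a] (suffix_append _ _) rfl

theorem head?_eq_getLast?_of_reverse_eq {l : List α} (h : l.reverse = l) :
    l.head? = l.getLast? := by
  rw [← getLast?_reverse, h]

theorem reverse_cons_append_singleton_eq_iff (a : α) (l : List α) :
    (a :: (l ++ [a])).reverse = a :: (l ++ [a]) ↔ l.reverse = l := by
  simp

end Palindrome

theorem palClosure_append_of_isLongestPalSuffix {t s : List Bool}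
    (h : IsLongestPalSuffix s (t ++ s)) : palClosure (t ++ s) = t ++ s ++ t.reverse := by
  have hfind : Nat.find (p := fun k => ((t ++ s).drop k).reverse = (t ++ s).drop k)
      ⟨(t ++ s).length, by simp⟩ = t.length := by
    rw [Nat.find_eq_iff]
    refine ⟨by simpa using h.2.1, fun j hj hpal => ?_⟩
    have := h.2.2 _ (drop_suffix j _) hpal
    simp only [length_drop, length_append] at this
    omega
  simp only [palClosure, hfind, take_left, drop_left]

section Mu

variable (z : Bool)

theorem mu_nil : mu z [] = [] := rfl

theorem mu_append (u v : List Bool) : mu z (u ++ v) = mu z u ++ mu z v :=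
  flatMap_append

theorem mu_cons (a : Bool) (u : List Bool) :
    mu z (a :: u) = z :: if a = z then mu z u else a :: mu z u := by
  by_cases h : a = z <;> simp [mu, h]

theorem mu_singleton (a : Bool) : mu z [a] = if a = z then [z] else [z, a] := by
  by_cases h : a = z <;> simp [mu, h]

theorem mu_eq_cons_tail {s : List Bool} (hs : s ≠ []) : mu z s = z :: (mu z s).tail := by
  obtain ⟨c, s, rfl⟩ := exists_cons_of_ne_nil hs
  rw [mu_cons]
  rfl

theorem head?_mu (u : List Bool) : ∀ c ∈ (mu z u).head?, c = z := by
  cases u <;> simp [mu_nil, mu_cons]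

theorem mu_injective : Function.Injective (mu z) := by
  intro u
  induction u with
  | nil => intro v h; cases v <;> simp_all [mu_nil, mu_cons]
  | cons a u ih =>
    intro v h
    cases v with
    | nil => simp [mu_nil, mu_cons] at h
    | cons b v =>
      simp only [mu_cons, cons.injEq, true_and] at h
      have hu := head?_mu z u
      have hv := head?_mu z v
      by_cases ha : a = z <;> by_cases hb : b = z <;> simp only [ha, hb, if_true, if_false] at h
      · rw [ha, hb, ih h]
      · exact absurd (hu b (by simp [h])) hb
      · exact absurd (hv a (by simp [← h])) ha
      · simp only [cons.injEq] at h; rw [h.1, ih h.2]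

theorem reverse_mu_append_singleton (t : List Bool) :
    (mu z t ++ [z]).reverse = mu z t.reverse ++ [z] := by
  induction t with
  | nil => rfl
  | cons a t ih =>
    rw [← singleton_append, mu_append, append_assoc, reverse_append, ih, reverse_append,
      reverse_singleton, mu_append, mu_singleton]
    by_cases h : a = z <;> simp [h]

theorem mu_append_singleton_reverse_eq_iff (s : List Bool) :
    (mu z s ++ [z]).reverse = mu z s ++ [z] ↔ s.reverse = s := by
  rw [reverse_mu_append_singleton, append_left_inj]
  exact (mu_injective z).eq_iff

theorem List.IsSuffix.mu {s u : List Bool} (h : s <:+ u) : mu z s <:+ mu z u := by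
  obtain ⟨t, rfl⟩ := h
  rw [mu_append]
  exact suffix_append _ _

theorem exists_suffix_eq_mu_of_suffix_mu {r u : List Bool} (hr : r <:+ mu z u)
    (hhead : ∀ c ∈ r.head?, c = z) : ∃ s, s <:+ u ∧ r = mu z s := by
  induction u with
  | nil => exact ⟨[], suffix_refl _, by simpa [mu_nil] using hr⟩
  | cons a u ih =>
    rw [mu_cons, suffix_cons_iff] at hr
    rcases hr with hr | hr
    · exact ⟨a :: u, suffix_refl _, hr.trans (mu_cons z a u).symm⟩
    · have hu : r <:+ mu z u := by
        split_ifs at hr with ha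
        · exact hr
        · rcases suffix_cons_iff.mp hr with rfl | hr
          · exact absurd (hhead a (by simp)) ha
          · exact hr
      obtain ⟨s, hs, rfl⟩ := ih hu
      exact ⟨s, hs.trans (suffix_cons _ _), rfl⟩

theorem exists_suffix_mu_eq_cons_of_suffix_mu {r u : List Bool} {c : Bool} (hr : r <:+ mu z u)
    (hc : c ∈ r.head?) (hcz : c ≠ z) : ∃ s, s <:+ u ∧ mu z s = z :: r := by
  induction u with
  | nil => simp [mu_nil] at hr; simp [hr] at hc
  | cons a u ih =>
    rw [mu_cons, suffix_cons_iff] at hr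
    rcases hr with rfl | hr
    · simp at hc
      exact absurd hc.symm hcz
    · split_ifs at hr with ha
      · obtain ⟨s, hs, h⟩ := ih hr
        exact ⟨s, hs.trans (suffix_cons _ _), h⟩
      · rcases suffix_cons_iff.mp hr with rfl | hr
        · exact ⟨a :: u, suffix_refl _, by rw [mu_cons, if_neg ha]⟩
        · obtain ⟨s, hs, h⟩ := ih hr
          exact ⟨s, hs.trans (suffix_cons _ _), h⟩

theorem IsLongestPalSuffix.mu_append_singleton {s u : List Bool} (h : IsLongestPalSuffix s u) :
    IsLongestPalSuffix (mu z s ++ [z]) (mu z u ++ [z]) := by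
  obtain ⟨hsu, hpal, hmax⟩ := h
  refine ⟨?_, (mu_append_singleton_reverse_eq_iff z s).mpr hpal, fun r hr hrpal => ?_⟩
  · obtain ⟨t, ht⟩ := hsu.mu z
    exact ⟨t, by rw [← ht, append_assoc]⟩
  rcases suffix_concat_iff.mp hr with rfl | ⟨r', rfl, hr'⟩
  · simp
  have hhead : ∀ c ∈ r'.head?, c = z := by
    have := head?_eq_getLast?_of_reverse_eq hrpal
    rw [getLast?_concat] at this
    cases r' with
    | nil => simp
    | cons d r' => simpa using this
  obtain ⟨s', hs', rfl⟩ := exists_suffix_eq_mu_of_suffix_mu z hr' hhead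
  have hs'pal := (mu_append_singleton_reverse_eq_iff z s').mp hrpal
  have hs's : s' <:+ s := suffix_of_suffix_length_le hs' hsu (hmax s' hs' hs'pal)
  simpa using (hs's.mu z).length_le

theorem IsLongestPalSuffix.tail_mu {s q : List Bool} {w : Bool} (hw : w ≠ z)
    (h : IsLongestPalSuffix s (q ++ [w])) : IsLongestPalSuffix (mu z s).tail (mu z (q ++ [w])) := by
  have hs := h.ne_nil
  obtain ⟨hsu, hpal, hmax⟩ := h
  refine ⟨(tail_suffix _).trans (hsu.mu z), ?_, fun r hr hrpal => ?_⟩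
  · have h2 := (mu_append_singleton_reverse_eq_iff z _).mpr hpal
    rwa [mu_eq_cons_tail z hs, cons_append, reverse_cons_append_singleton_eq_iff] at h2
  have hmuq : mu z (q ++ [w]) = mu z q ++ [z] ++ [w] := by
    rw [mu_append, mu_singleton, if_neg hw, append_assoc]
    rfl
  rcases suffix_concat_iff.mp (hmuq ▸ hr) with rfl | ⟨r', rfl, -⟩
  · simp
  have hhead : w ∈ (r' ++ [w]).head? := by
    rw [head?_eq_getLast?_of_reverse_eq hrpal]
    simp
  obtain ⟨s', hs', hmu⟩ := exists_suffix_mu_eq_cons_of_suffix_mu z hr hhead hw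
  have hs'pal : s'.reverse = s' := by
    rwa [← mu_append_singleton_reverse_eq_iff z, hmu, cons_append,
      reverse_cons_append_singleton_eq_iff]
  have hs's := suffix_of_suffix_length_le hs' hsu (hmax s' hs' hs'pal)
  have hlen := (hs's.mu z).length_le
  rw [hmu] at hlen
  simp only [length_cons, length_tail] at hlen ⊢
  omega

theorem palClosure_mu_append_singleton (u : List Bool) :
    palClosure (mu z u ++ [z]) = mu z (palClosure u) ++ [z] := by
  obtain ⟨s, hs⟩ := exists_isLongestPalSuffix u
  obtain ⟨t, rfl⟩ := hs.1
  have hW := hs.mu_append_singleton z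
  rw [mu_append, append_assoc] at hW ⊢
  rw [palClosure_append_of_isLongestPalSuffix hW, palClosure_append_of_isLongestPalSuffix hs,
    mu_append, mu_append, append_assoc _ (mu z t.reverse), ← reverse_mu_append_singleton]
  simp

theorem palClosure_mu_append_singleton_of_ne {w : Bool} (hw : w ≠ z) (q : List Bool) :
    palClosure (mu z (q ++ [w])) = mu z (palClosure (q ++ [w])) ++ [z] := by
  obtain ⟨s, hs⟩ := exists_isLongestPalSuffix (q ++ [w])
  have hW := hs.tail_mu z hw
  have hs0 := hs.ne_nil
  obtain ⟨t, ht⟩ := hs.1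
  rw [← ht] at hs hW ⊢
  have hsplit : mu z (t ++ s) = (mu z t ++ [z]) ++ (mu z s).tail := by
    rw [mu_append, mu_eq_cons_tail z hs0]
    simp
  calc palClosure (mu z (t ++ s)) = mu z (t ++ s) ++ (mu z t ++ [z]).reverse := by
        rw [hsplit, palClosure_append_of_isLongestPalSuffix (hsplit ▸ hW)]
    _ = mu z (t ++ s ++ t.reverse) ++ [z] := by
        rw [reverse_mu_append_singleton, mu_append z (t ++ s), append_assoc]
    _ = mu z (palClosure (t ++ s)) ++ [z] := by
        rw [palClosure_append_of_isLongestPalSuffix hs]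

end Mu

theorem psi_append_singleton (v : List Bool) (a : Bool) :
    psi (v ++ [a]) = palClosure (psi v ++ [a]) := by
  simp [psi, foldl_append]

theorem psi_cons (z : Bool) (v : List Bool) : psi (z :: v) = mu z (psi v) ++ [z] := by
  induction v using reverseRecOn with
  | nil =>
    have h : IsLongestPalSuffix [z] ([] ++ [z]) := ⟨suffix_refl _, rfl, fun r hr _ => hr.length_le⟩
    simpa [psi, mu_nil] using palClosure_append_of_isLongestPalSuffix h
  | append_singleton v a ih =>
    rw [← cons_append, psi_append_singleton, ih, psi_append_singleton]
    by_cases ha : a = z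
    · subst ha
      rw [← palClosure_mu_append_singleton, mu_append, mu_singleton, if_pos rfl]
    · rw [← palClosure_mu_append_singleton_of_ne z ha, mu_append, mu_singleton, if_neg ha,
        append_assoc]
      rfl

theorem mu_pair_of_ne {x y : Bool} (hxy : x ≠ y) (z : Bool) : mu z [x, y] = [z, x, y] := by
  cases x <;> cases y <;> cases z <;> simp_all [mu]

theorem stmt8 (v : List Bool) (x y : Bool) (hxy : x ≠ y) :
    muW v [x, y] = psi v ++ [x, y] := by
  induction v with
  | nil => simp [muW, psi]
  | cons z v ih => rw [muW, ih, psi_cons, mu_append, mu_pair_of_ne hxy]; simp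
end

section
/- A word w over {a,b} is central (i.e., w ∈ ψ({a,b}*)) if and only if w is a power of a single letter or w satisfies w = w1 a b w2 = w2 b a w1 for some words w1, w2; in the latter case w1 and w2 are uniquely determined central words, p = |w1| + 2 and q = |w2| + 2 are coprime periods of w, and min{p,q} is the minimal period of w. -/
/-!
A word `w = w₁ a b w₂ = w₂ b a w₁` has the periods `p = |w₁| + 2` and `q = |w₂| + 2`, and
`|w| = p + q - 2`. By the theorem of Fine and Wilf, a common divisor of `p` and `q`, or a period
shorter than both, would again be a period of `w`, and it would identify the letters `a` and `b`
standing at positions `|w₁|` and `|w₂|`: this gives coprimality, minimality and uniqueness.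
Centrality goes by induction on `|w|`: after exchanging the letters, `|w₁| < |w₂|`, so either
`w = aᵏ⁺¹ b aᵏ⁺¹` or `w₂ = w₁ a b u = u b a w₁` is a shorter word of the same form; then `w₁`
and `w₂` are central palindromes and `w` is the palindromic closure of `w₂ b`. Conversely the
palindromic closure of `w b` is `w₁ a b w`, of the same form, and `w a` is handled by exchanging
the letters.
-/

namespace List

variable {α : Type*} {w : List α} {p : ℕ}

theorem hasPeriod_iff_drop_prefix : w.HasPeriod p ↔ w.drop p <+: w := by
  conv_rhs => rw [← prefix_append_right_inj (w.take p), take_append_drop]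
  rfl

theorem HasPeriod.getElem?_eq_of_mod_eq (h : w.HasPeriod p) {i j : ℕ} (hi : i < w.length)
    (hj : j < w.length) (hij : i % p = j % p) : w[i]? = w[j]? := by
  rw [← h.getElem?_mod p i w hi, ← h.getElem?_mod p j w hj, hij]

theorem eq_replicate_of_append_singleton_eq_cons {a : α} (h : w ++ [a] = a :: w) :
    w = replicate w.length a := by
  induction w with
  | nil => rfl
  | cons b t ih =>
    obtain ⟨rfl, ht⟩ : b = a ∧ t ++ [a] = b :: t := by simpa using h
    simpa [replicate_succ] using ih ht

theorem hasPeriod_of_reverse_drop_append {x : α} {k : ℕ} (hw : w.reverse = w) (hk : k < w.length)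
    (h : ((w ++ [x]).drop k).reverse = (w ++ [x]).drop k) :
    w.HasPeriod (k + 1) ∧ w[k]? = some x := by
  rw [drop_append_of_le_length hk.le, reverse_append, reverse_drop, hw,
    drop_eq_getElem_cons hk] at h
  simp only [reverse_singleton, cons_append, nil_append, cons.injEq] at h
  refine ⟨hasPeriod_iff_drop_prefix.2 ?_, by simp [h.1]⟩
  exact (prefix_append _ [x]).trans (h.2 ▸ take_prefix _ w)

end List

theorem hasPeriod_iff {w : List Bool} {p : ℕ} : HasPeriod w p ↔ 0 < p ∧ w.HasPeriod p := by
  simp only [HasPeriod, List.get_eq_getElem, List.hasPeriod_iff_forall_getElem?_mod]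
  refine and_congr_right fun hp => ⟨fun h i hi => ?_, fun h i j hi hj hij => ?_⟩
  · have hip : i % p < w.length := (Nat.mod_le i p).trans_lt hi
    rw [List.getElem?_eq_getElem hi, List.getElem?_eq_getElem hip,
      h i (i % p) hi hip (Nat.mod_mod _ _).symm]
  · have := (h i hi).trans (hij ▸ (h j hj).symm)
    simpa [List.getElem?_eq_getElem, hi, hj] using this

section PalClosure

variable {w : List Bool}

theorem exists_isLeast_reverse_drop_eq (w : List Bool) :
    ∃ k, IsLeast {j | (w.drop j).reverse = w.drop j} k :=
  ⟨_, isLeast_csInf ⟨w.length, by simp⟩⟩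

theorem palClosure_eq_of_isLeast {k : ℕ} (hk : IsLeast {j | (w.drop j).reverse = w.drop j} k) :
    palClosure w = w ++ (w.take k).reverse := by
  have : Nat.find (p := fun j => (w.drop j).reverse = w.drop j) ⟨w.length, by simp⟩ = k :=
    (Nat.find_eq_iff _).2 ⟨hk.1, fun j hj h => (hk.2 h).not_gt hj⟩
  simp only [palClosure, this, List.take_append_drop]

theorem palClosure_reverse (w : List Bool) : (palClosure w).reverse = palClosure w := by
  obtain ⟨k, hk⟩ := exists_isLeast_reverse_drop_eq w
  have hpal : (w.drop k).reverse = w.drop k := hk.1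
  have hrev : w.reverse = w.drop k ++ (w.take k).reverse := by
    rw [← hpal, ← List.reverse_append, List.take_append_drop]
  rw [palClosure_eq_of_isLeast hk, List.reverse_append, List.reverse_reverse, hrev,
    ← List.append_assoc, List.take_append_drop]

theorem palClosure_of_reverse_eq (hw : w.reverse = w) : palClosure w = w := by
  simpa using palClosure_eq_of_isLeast (k := 0) ⟨by simpa using hw, fun _ _ => Nat.zero_le _⟩

theorem palClosure_map {f : Bool → Bool} (hf : Function.Injective f) :
    palClosure (w.map f) = (palClosure w).map f := by
  obtain ⟨k, hk⟩ := exists_isLeast_reverse_drop_eq w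
  have hset : {j | ((w.map f).drop j).reverse = (w.map f).drop j} =
      {j | (w.drop j).reverse = w.drop j} := by
    simp only [← List.map_drop, ← List.map_reverse, (List.map_injective_iff.2 hf).eq_iff]
  rw [palClosure_eq_of_isLeast (hset ▸ hk), palClosure_eq_of_isLeast hk]
  simp

theorem palClosure_replicate_append {x y : Bool} (hxy : x ≠ y) (k : ℕ) :
    palClosure (List.replicate k x ++ [y]) = List.replicate k x ++ y :: List.replicate k x := by
  have hk : IsLeast {j | ((List.replicate k x ++ [y]).drop j).reverse =
      (List.replicate k x ++ [y]).drop j} k := by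
    refine ⟨by simp, fun j hj => ?_⟩
    by_contra! hjk
    obtain ⟨m, hm⟩ : ∃ m, k - j = m + 1 := ⟨k - j - 1, by omega⟩
    rw [Set.mem_ofPred_eq, List.drop_append_of_le_length (by simp; omega), List.drop_replicate,
      hm] at hj
    simpa [List.replicate_succ, hxy.symm] using congrArg List.head? hj
  rw [palClosure_eq_of_isLeast hk]
  simp

end PalClosure

theorem E_E (w : List Bool) : E (E w) = w := by simp [E, Function.comp_def]

theorem length_E (w : List Bool) : (E w).length = w.length := List.length_map _

theorem palClosure_E (w : List Bool) : palClosure (E w) = E (palClosure w) :=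
  palClosure_map Bool.not_injective

section Psi

theorem psi_append (v : List Bool) (y : Bool) : psi (v ++ [y]) = palClosure (psi v ++ [y]) := by
  simp [psi, List.foldl_append]

theorem psi_reverse (v : List Bool) : (psi v).reverse = psi v := by
  induction v using List.reverseRecOn with
  | nil => rfl
  | append_singleton v y _ => rw [psi_append]; exact palClosure_reverse _

theorem psi_replicate (k : ℕ) (x : Bool) : psi (List.replicate k x) = List.replicate k x := by
  induction k with
  | zero => rfl
  | succ k ih =>
    rw [List.replicate_succ', psi_append, ih]
    exact palClosure_of_reverse_eq (by simp [← List.replicate_succ'])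

theorem psi_E (v : List Bool) : psi (E v) = E (psi v) := by
  induction v using List.reverseRecOn with
  | nil => rfl
  | append_singleton v y ih =>
    have hE : ∀ u : List Bool, E (u ++ [y]) = E u ++ [!y] := by simp [E]
    rw [hE, psi_append, psi_append, ih, ← hE, palClosure_E]

end Psi

def IsCentral (w : List Bool) : Prop := ∃ v, psi v = w

namespace IsCentral

variable {w : List Bool}

theorem reverse_eq : IsCentral w → w.reverse = w := fun ⟨v, hv⟩ => hv ▸ psi_reverse v

theorem E : IsCentral w → IsCentral (E w) := fun ⟨v, hv⟩ => ⟨_root_.E v, by rw [psi_E, hv]⟩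

theorem of_E (h : IsCentral (_root_.E w)) : IsCentral w := E_E w ▸ h.E

end IsCentral

theorem Nat.mod_eq_of_dvd_add_of_dvd_add {a b c g : ℕ} (ha : g ∣ a + c) (hb : g ∣ b + c) :
    a % g = b % g :=
  Nat.ModEq.add_right_cancel' c
    ((Nat.modEq_zero_iff_dvd.2 ha).trans (Nat.modEq_zero_iff_dvd.2 hb).symm)

def IsStandardFactorization (w w₁ w₂ : List Bool) : Prop :=
  w = w₁ ++ [false, true] ++ w₂ ∧ w = w₂ ++ [true, false] ++ w₁

namespace IsStandardFactorization

variable {w w₁ w₂ w₁' w₂' : List Bool}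

theorem length_eq (h : IsStandardFactorization w w₁ w₂) :
    w.length = w₁.length + w₂.length + 2 := by
  rw [h.1]; simp; omega

theorem getElem?_left (h : IsStandardFactorization w w₁ w₂) : w[w₁.length]? = some false := by
  rw [h.1]; simp

theorem getElem?_right (h : IsStandardFactorization w w₁ w₂) : w[w₂.length]? = some true := by
  rw [h.2]; simp

theorem getElem?_right_add_one (h : IsStandardFactorization w w₁ w₂) :
    w[w₂.length + 1]? = some false := by
  rw [h.2]; simp

theorem hasPeriod_left (h : IsStandardFactorization w w₁ w₂) : w.HasPeriod (w₁.length + 2) := by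
  have hdrop : w.drop (w₁.length + 2) = w₂ := by rw [h.1]; simp
  rw [List.hasPeriod_iff_drop_prefix, hdrop]
  exact ⟨[true, false] ++ w₁, by rw [h.2, List.append_assoc]⟩

theorem hasPeriod_right (h : IsStandardFactorization w w₁ w₂) : w.HasPeriod (w₂.length + 2) := by
  have hdrop : w.drop (w₂.length + 2) = w₁ := by rw [h.2]; simp
  rw [List.hasPeriod_iff_drop_prefix, hdrop]
  exact ⟨[false, true] ++ w₂, by rw [h.1, List.append_assoc]⟩

/-- Such a period would identify the letter `a` at position `|w₁|` with the letter `b` at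
position `|w₂'|`. -/
theorem not_hasPeriod (h : IsStandardFactorization w w₁ w₂)
    (h' : IsStandardFactorization w w₁' w₂') {g : ℕ} (hg₁ : g ∣ w₁.length + 2)
    (hg₂ : g ∣ w₂'.length + 2) : ¬ w.HasPeriod g := fun hg => by
  have := hg.getElem?_eq_of_mod_eq (by have := h.length_eq; omega)
    (by have := h'.length_eq; omega) (Nat.mod_eq_of_dvd_add_of_dvd_add hg₁ hg₂)
  rw [h.getElem?_left, h'.getElem?_right] at this
  exact Bool.false_ne_true (Option.some_injective _ this)

theorem coprime (h : IsStandardFactorization w w₁ w₂) :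
    Nat.Coprime (w₁.length + 2) (w₂.length + 2) := by
  by_contra hne
  have hpos := Nat.gcd_pos_of_pos_left (w₂.length + 2) (by omega : 0 < w₁.length + 2)
  have hlen := h.length_eq
  exact h.not_hasPeriod h (Nat.gcd_dvd_left _ _) (Nat.gcd_dvd_right _ _)
    (h.hasPeriod_left.gcd h.hasPeriod_right (by rw [Nat.Coprime] at hne; omega))

theorem length_le (h : IsStandardFactorization w w₁ w₂)
    (h' : IsStandardFactorization w w₁' w₂') : w₁.length ≤ w₁'.length := by
  by_contra! hlt
  have hpos := Nat.gcd_pos_of_pos_left (w₂.length + 2) (by omega : 0 < w₁'.length + 2)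
  have hlen := h.length_eq
  exact h'.not_hasPeriod h (Nat.gcd_dvd_left _ _) (Nat.gcd_dvd_right _ _)
    (h'.hasPeriod_left.gcd h.hasPeriod_right (by omega))

theorem unique (h : IsStandardFactorization w w₁ w₂) (h' : IsStandardFactorization w w₁' w₂') :
    w₁' = w₁ ∧ w₂' = w₂ := by
  have hl : w₁'.length = w₁.length := le_antisymm (h'.length_le h) (h.length_le h')
  have e := h.1.symm.trans h'.1
  simp only [List.append_assoc] at e
  obtain ⟨h₁, h₂⟩ := List.append_inj e hl.symm
  exact ⟨h₁.symm, (List.append_cancel_left h₂).symm⟩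

theorem minPeriod_eq (h : IsStandardFactorization w w₁ w₂) :
    minPeriod w = min (w₁.length + 2) (w₂.length + 2) := by
  have hlen := h.length_eq
  have hmin : HasPeriod w (min (w₁.length + 2) (w₂.length + 2)) := by
    rcases min_cases (w₁.length + 2) (w₂.length + 2) with ⟨hm, -⟩ | ⟨hm, -⟩ <;> rw [hm]
    exacts [hasPeriod_iff.2 ⟨by omega, h.hasPeriod_left⟩,
      hasPeriod_iff.2 ⟨by omega, h.hasPeriod_right⟩]
  refine le_antisymm (Nat.sInf_le hmin) (le_csInf ⟨_, hmin⟩ fun r hr => ?_)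
  by_contra! hlt
  obtain ⟨hr₀, hr⟩ := hasPeriod_iff.1 hr
  have hd := Nat.gcd_pos_of_pos_left (w₁.length + 2) hr₀
  have hdr := Nat.gcd_le_left (w₁.length + 2) hr₀
  have hd' := Nat.gcd_pos_of_pos_left (w₂.length + 2) hd
  have hper := (hr.gcd h.hasPeriod_left (by omega)).gcd h.hasPeriod_right (by omega)
  exact h.not_hasPeriod h ((Nat.gcd_dvd_left _ _).trans (Nat.gcd_dvd_right _ _))
    (Nat.gcd_dvd_right _ _) hper

theorem E (h : IsStandardFactorization w w₁ w₂) :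
    IsStandardFactorization (E w) (E w₂) (E w₁) :=
  ⟨by rw [h.2]; simp [_root_.E], by rw [h.1]; simp [_root_.E]⟩

theorem extend (h : IsStandardFactorization w w₁ w₂) :
    IsStandardFactorization (w₁ ++ [false, true] ++ w) w₁ w := by
  refine ⟨rfl, ?_⟩
  conv_lhs => rw [h.2]
  conv_rhs => rw [h.1]
  simp

theorem shrink (h : IsStandardFactorization w w₁ w₂) (hl : w₁.length + 2 ≤ w₂.length) :
    IsStandardFactorization w₂ w₁ (w₂.drop (w₁.length + 2)) := by
  obtain ⟨u, rfl⟩ : w₁ ++ [false, true] <+: w₂ :=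
    List.prefix_of_prefix_length_le ⟨w₂, h.1.symm⟩
      ⟨[true, false] ++ w₁, by rw [h.2, List.append_assoc]⟩ (by simpa using hl)
  have hu : (w₁ ++ [false, true] ++ u).drop (w₁.length + 2) = u := by simp
  rw [hu]
  exact ⟨rfl, by simpa using h.1.symm.trans h.2⟩

theorem eq_replicate (h : IsStandardFactorization w w₁ w₂) (hl : w₂.length = w₁.length + 1) :
    ∃ k, w₁ = List.replicate k false ∧ w₂ = List.replicate (k + 1) false := by
  obtain rfl : w₁ ++ [false] = w₂ :=
    (List.prefix_of_prefix_length_le (l₃ := w) ⟨true :: w₂, by rw [h.1]; simp⟩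
      ⟨[true, false] ++ w₁, by rw [h.2, List.append_assoc]⟩ (by simp [hl])).eq_of_length
      (by simp [hl])
  have hw₁ := List.eq_replicate_of_append_singleton_eq_cons (by simpa using h.1.symm.trans h.2)
  exact ⟨w₁.length, hw₁, by rw [List.replicate_succ', ← hw₁]⟩

theorem reverse_eq (h : IsStandardFactorization w w₁ w₂) (h₁ : w₁.reverse = w₁)
    (h₂ : w₂.reverse = w₂) : w.reverse = w := by
  conv_lhs => rw [h.1]
  conv_rhs => rw [h.2]
  simp [h₁, h₂]

/-- A shorter palindromic suffix of `w ++ [true]` would give the palindrome `w` a period which,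
by Fine and Wilf together with the period `|w₂| + 2`, identifies a letter `b` with a letter `a`. -/
theorem palClosure_append_true (h : IsStandardFactorization w w₁ w₂) (h₁ : w₁.reverse = w₁)
    (h₂ : w₂.reverse = w₂) :
    palClosure (w ++ [true]) = w₁ ++ [false, true] ++ w := by
  have hlen := h.length_eq
  have hk : IsLeast {j | ((w ++ [true]).drop j).reverse = (w ++ [true]).drop j}
      (w₁.length + 1) := by
    refine ⟨by rw [Set.mem_ofPred_eq, h.1]; simp [h₂], fun j hj => ?_⟩
    by_contra! hjk
    obtain ⟨hper, hwj⟩ :=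
      List.hasPeriod_of_reverse_drop_append (h.reverse_eq h₁ h₂) (by omega) hj
    have hg := Nat.gcd_pos_of_pos_left (w₂.length + 2) (by omega : 0 < j + 1)
    have := (hper.gcd h.hasPeriod_right (by omega)).getElem?_eq_of_mod_eq (by omega)
      (by omega) (Nat.mod_eq_of_dvd_add_of_dvd_add (Nat.gcd_dvd_left _ _) (Nat.gcd_dvd_right _ _))
    rw [hwj, h.getElem?_right_add_one] at this
    exact Bool.false_ne_true (Option.some_injective _ this).symm
  have htake : (w ++ [true]).take (w₁.length + 1) = w₁ ++ [false] := by
    rw [h.1]; simp [List.take_append]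
  rw [palClosure_eq_of_isLeast hk, htake, h.extend.2]
  simp [h₁]

end IsStandardFactorization

theorem isCentral_replicate (k : ℕ) (x : Bool) : IsCentral (List.replicate k x) :=
  ⟨_, psi_replicate k x⟩

theorem IsStandardFactorization.isCentral {w w₁ w₂ : List Bool}
    (h : IsStandardFactorization w w₁ w₂) : IsCentral w₁ ∧ IsCentral w₂ ∧ IsCentral w := by
  induction hn : w.length using Nat.strong_induction_on generalizing w w₁ w₂ with
  | _ n ih =>
  have hlen := h.length_eq
  wlog hlt : w₁.length < w₂.length generalizing w w₁ w₂
  · have hne : w₁.length ≠ w₂.length := fun he => by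
      simpa [he, h.getElem?_right] using h.getElem?_left
    obtain ⟨h₂, h₁, hw⟩ := this h.E ((length_E w).trans hn) h.E.length_eq
      (by simp only [length_E]; omega)
    exact ⟨h₁.of_E, h₂.of_E, hw.of_E⟩
  rcases Nat.lt_or_ge (w₁.length + 1) w₂.length with hl | hl
  · obtain ⟨hc₁, hcu, v, rfl⟩ := ih _ (by omega) (h.shrink hl) rfl
    refine ⟨hc₁, ⟨v, rfl⟩, v ++ [true], ?_⟩
    rw [psi_append, (h.shrink hl).palClosure_append_true hc₁.reverse_eq hcu.reverse_eq, ← h.1]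
  · obtain ⟨k, rfl, rfl⟩ := h.eq_replicate (by omega)
    refine ⟨isCentral_replicate _ _, isCentral_replicate _ _,
      List.replicate (k + 1) false ++ [true], ?_⟩
    rw [psi_append, psi_replicate, palClosure_replicate_append Bool.false_ne_true, h.2]
    simp [List.replicate_succ]

def HasStandardForm (w : List Bool) : Prop :=
  (∃ (x : Bool) (k : ℕ), w = List.replicate k x) ∨
    ∃ w₁ w₂, IsStandardFactorization w w₁ w₂

namespace HasStandardForm

variable {w : List Bool}

theorem E (h : HasStandardForm w) : HasStandardForm (E w) := by
  rcases h with ⟨x, k, rfl⟩ | ⟨w₁, w₂, h⟩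
  · exact Or.inl ⟨!x, k, by simp [_root_.E]⟩
  · exact Or.inr ⟨_, _, h.E⟩

theorem palClosure_append_true (h : HasStandardForm w) :
    HasStandardForm (palClosure (w ++ [true])) := by
  rcases h with ⟨x, k, rfl⟩ | ⟨w₁, w₂, h⟩
  · rcases k with _ | k
    · exact Or.inl ⟨true, 1, palClosure_of_reverse_eq rfl⟩
    cases x
    · rw [palClosure_replicate_append Bool.false_ne_true]
      refine Or.inr ⟨List.replicate k false, List.replicate (k + 1) false, ?_, ?_⟩
      · simp [List.replicate_succ']
      · simp [List.replicate_succ]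
    · rw [← List.replicate_succ']
      exact Or.inl ⟨true, k + 2, palClosure_of_reverse_eq List.reverse_replicate⟩
  · obtain ⟨h₁, h₂, -⟩ := h.isCentral
    rw [h.palClosure_append_true h₁.reverse_eq h₂.reverse_eq]
    exact Or.inr ⟨w₁, w, h.extend⟩

end HasStandardForm

theorem hasStandardForm_psi (v : List Bool) : HasStandardForm (psi v) := by
  induction v using List.reverseRecOn with
  | nil => exact Or.inl ⟨false, 0, rfl⟩
  | append_singleton v y ih =>
    cases y
    · have hv : v ++ [false] = E (E v ++ [true]) := by simp [E, Function.comp_def]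
      rw [hv, psi_E, psi_append]
      exact (HasStandardForm.palClosure_append_true (by rw [psi_E]; exact ih.E)).E
    · rw [psi_append]
      exact ih.palClosure_append_true

theorem stmt13 :
    (∀ w : List Bool,
      (∃ v : List Bool, psi v = w) ↔
      ((∃ (x : Bool) (k : ℕ), w = List.replicate k x) ∨
       (∃ w₁ w₂ : List Bool,
          w = w₁ ++ [false, true] ++ w₂ ∧ w = w₂ ++ [true, false] ++ w₁))) ∧
    (∀ w w₁ w₂ : List Bool,
      w = w₁ ++ [false, true] ++ w₂ → w = w₂ ++ [true, false] ++ w₁ →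
      (∃ v₁, psi v₁ = w₁) ∧ (∃ v₂, psi v₂ = w₂) ∧
      (∀ w₁s w₂s : List Bool,
        w = w₁s ++ [false, true] ++ w₂s → w = w₂s ++ [true, false] ++ w₁s →
        w₁s = w₁ ∧ w₂s = w₂) ∧
      HasPeriod w (w₁.length + 2) ∧ HasPeriod w (w₂.length + 2) ∧
      Nat.Coprime (w₁.length + 2) (w₂.length + 2) ∧
      minPeriod w = min (w₁.length + 2) (w₂.length + 2)) := by
  refine ⟨fun w => ⟨fun ⟨v, hv⟩ => hv ▸ hasStandardForm_psi v, ?_⟩, fun w w₁ w₂ h₁ h₂ => ?_⟩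
  · rintro (⟨x, k, rfl⟩ | ⟨w₁, w₂, h⟩)
    exacts [isCentral_replicate k x, IsStandardFactorization.isCentral h |>.2.2]
  · have h : IsStandardFactorization w w₁ w₂ := ⟨h₁, h₂⟩
    obtain ⟨hc₁, hc₂, -⟩ := h.isCentral
    exact ⟨hc₁, hc₂, fun _ _ g₁ g₂ => h.unique ⟨g₁, g₂⟩,
      hasPeriod_iff.2 ⟨by omega, h.hasPeriod_left⟩, hasPeriod_iff.2 ⟨by omega, h.hasPeriod_right⟩,
      h.coprime, h.minPeriod_eq⟩
end
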